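/- arXiv:math/0605275 — 2 statements merged into one kernel-verified Lean document; each statement's English description precedes it below -/
import Mathlib

section
/- For graphs A, B, C, if A is connected and has more than one vertex, then the poset Hom(A, B ⨿ C) is isomorphic to the disjoint union of posets Hom(A,B) ⨿ Hom(A,C). -/
/-- A graph: a symmetric relation on a vertex set, loops allowed. -/
structure LGraph (V : Type) : Type where
  Adj : V → V → Prop
  symm : ∀ u v : V, Adj u v → Adj v u

/-- A graph homomorphism: a vertex map preserving adjacency. -/
def LGraph.IsHom {V W : Type} (G : LGraph V) (H : LGraph W) (f : V → W) : Prop :=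
  ∀ u v : V, G.Adj u v → H.Adj (f u) (f v)

/-- The categorical product of graphs. -/
def LGraph.prod {V W : Type} (G : LGraph V) (H : LGraph W) : LGraph (V × W) :=
  ⟨fun p q => G.Adj p.1 q.1 ∧ H.Adj p.2 q.2,
   fun p q h => ⟨G.symm _ _ h.1, H.symm _ _ h.2⟩⟩

/-- The categorical exponential graph `H^G`: vertices are all functions `V(G) → V(H)`. -/
def LGraph.exp {V W : Type} (G : LGraph V) (H : LGraph W) : LGraph (V → W) :=
  ⟨fun f f' => ∀ v v' : V, G.Adj v v' → H.Adj (f v) (f' v'),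
   fun f f' h v v' hvv' => H.symm _ _ (h v' v (G.symm _ _ hvv'))⟩

/-- Multihomomorphisms between graphs. -/
def LGraph.IsMultiHom {V W : Type} (G : LGraph V) (H : LGraph W) (η : V → Set W) : Prop :=
  (∀ v, (η v).Nonempty) ∧
    ∀ x y : V, G.Adj x y → ∀ x' ∈ η x, ∀ y' ∈ η y, H.Adj x' y'

/-- The Hom poset, ordered by pointwise containment. -/
def MultiHom {V W : Type} (G : LGraph V) (H : LGraph W) : Type :=
  {η : V → Set W // LGraph.IsMultiHom G H η}

instance {V W : Type} (G : LGraph V) (H : LGraph W) : PartialOrder (MultiHom G H) :=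
  Subtype.partialOrder _

/-- The reflexive path `Iₙ` on `{0, …, n}`. -/
def pathGraph (n : ℕ) : LGraph (Fin (n + 1)) :=
  ⟨fun i j => (i : ℕ) = j ∨ (i : ℕ) + 1 = j ∨ (j : ℕ) + 1 = i,
   fun i j h => by tauto⟩

/-- ×-homotopy of vertex maps. -/
def Homotopic {V W : Type} (G : LGraph V) (H : LGraph W) (f g : V → W) : Prop :=
  ∃ n : ℕ, 1 ≤ n ∧ ∃ F : V × Fin (n + 1) → W,
    (G.prod (pathGraph n)).IsHom H F ∧
    (∀ v, F (v, 0) = f v) ∧ (∀ v, F (v, Fin.last n) = g v)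

/-- The singleton-valued multihomomorphism associated to a graph homomorphism. -/
def singletonMH {V W : Type} {G : LGraph V} {H : LGraph W} (f : V → W)
    (hf : G.IsHom H f) : MultiHom G H :=
  ⟨fun v => {f v},
   ⟨fun v => ⟨f v, rfl⟩, fun x y hxy x' hx' y' hy' => by
      simp only [Set.mem_singleton_iff] at hx' hy'
      subst hx'; subst hy'; exact hf _ _ hxy⟩⟩

/-- Disjoint union (coproduct) of graphs. -/
def LGraph.coprod {V W : Type} (G : LGraph V) (H : LGraph W) : LGraph (V ⊕ W) :=
  ⟨Sum.LiftRel G.Adj H.Adj,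
   fun u v h => by
    cases h with
    | inl h => exact Sum.LiftRel.inl (G.symm _ _ h)
    | inr h => exact Sum.LiftRel.inr (H.symm _ _ h)⟩

/-- The induced subgraph obtained by deleting the vertex `v`. -/
def LGraph.deleteVert {V : Type} (G : LGraph V) (v : V) : LGraph {x : V // x ≠ v} :=
  ⟨fun a b => G.Adj a.1 b.1, fun a b h => G.symm _ _ h⟩

/-- The cartesian (box) product of graphs. -/
def LGraph.box {V W : Type} (G : LGraph V) (H : LGraph W) : LGraph (V × W) :=
  ⟨fun p q => (G.Adj p.1 q.1 ∧ p.2 = q.2) ∨ (p.1 = q.1 ∧ H.Adj p.2 q.2),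
   fun p q h => by
    rcases h with ⟨h1, h2⟩ | ⟨h1, h2⟩
    · exact Or.inl ⟨G.symm _ _ h1, h2.symm⟩
    · exact Or.inr ⟨h1.symm, H.symm _ _ h2⟩⟩

/-- The cartesian exponential graph: vertices are the graph homomorphisms. -/
def LGraph.cartExp {V W : Type} (G : LGraph V) (H : LGraph W) :
    LGraph {f : V → W // G.IsHom H f} :=
  ⟨fun f f' => ∀ b, H.Adj (f.1 b) (f'.1 b), fun f f' h b => H.symm _ _ (h b)⟩

/-- A ×-homotopy equivalence of graphs. -/
def HtpyEquiv {V W : Type} (G : LGraph V) (H : LGraph W) (f : V → W) : Prop :=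
  G.IsHom H f ∧ ∃ g : W → V, H.IsHom G g ∧
    Homotopic G G (g ∘ f) id ∧ Homotopic H H (f ∘ g) id

/-- The one-point looped graph. -/
def oneGraph : LGraph Unit := ⟨fun _ _ => True, fun _ _ _ => trivial⟩

/-
A multihomomorphism into `B ⨿ C` sends adjacent vertices to sets on the same side, as `B ⨿ C`
has no edges between its two sides. Since `A` is connected and, having two vertices, has no
isolated vertex, chaining through neighbours (a vertex is compared with itself through one of
them) puts all values on a single side. So every multihomomorphism is the image of one into `B`
or one into `C`, and the two images are incomparable because the values are nonempty.
-/

open Function Set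

def OrderEmbedding.sumElim {α β γ : Type*} [PartialOrder α] [PartialOrder β] [Preorder γ]
    (f : α ↪o γ) (g : β ↪o γ) (hfg : ∀ a b, ¬ f a ≤ g b) (hgf : ∀ a b, ¬ g b ≤ f a) :
    α ⊕ β ↪o γ :=
  OrderEmbedding.ofMapLEIff (Sum.elim f g) <| by
    rintro (_ | _) (_ | _) <;> simp [hfg, hgf]

lemma LGraph.exists_adj_of_connected {V : Type} [Nontrivial V] (G : LGraph V)
    (hconn : ∀ u v : V, Relation.ReflTransGen G.Adj u v) (u : V) : ∃ w, G.Adj u w := by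
  obtain ⟨v, hvu⟩ := exists_ne u
  rcases (hconn u v).cases_head with rfl | ⟨w, huw, -⟩
  · exact absurd rfl hvu
  · exact ⟨w, huw⟩

lemma LGraph.coprod_isHom_inl {V W : Type} (G : LGraph V) (H : LGraph W) :
    G.IsHom (G.coprod H) Sum.inl :=
  fun _ _ => Sum.LiftRel.inl

lemma LGraph.coprod_isHom_inr {V W : Type} (G : LGraph V) (H : LGraph W) :
    H.IsHom (G.coprod H) Sum.inr :=
  fun _ _ => Sum.LiftRel.inr

lemma LGraph.isLeft_eq_of_coprod_adj {V W : Type} {G : LGraph V} {H : LGraph W}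
    {x y : V ⊕ W} (h : (G.coprod H).Adj x y) : x.isLeft = y.isLeft := by
  cases h <;> rfl

namespace MultiHom

variable {V W X Y : Type} {G : LGraph V} {H : LGraph W} {K : LGraph X} {L : LGraph Y}

def map (f : W → X) (hf : H.IsHom K f) (η : MultiHom G H) : MultiHom G K :=
  ⟨fun v => f '' η.1 v, fun v => (η.2.1 v).image f, by
    rintro x y hxy _ ⟨a, ha, rfl⟩ _ ⟨b, hb, rfl⟩
    exact hf a b (η.2.2 x y hxy a ha b hb)⟩

def mapOrderEmbedding (f : W → X) (hf : H.IsHom K f) (hinj : Injective f) :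
    MultiHom G H ↪o MultiHom G K :=
  OrderEmbedding.ofMapLEIff (map f hf) fun _ _ =>
    forall_congr' fun _ => image_subset_image_iff hinj

lemma exists_map_eq (f : W → X) (hf : H.IsHom K f)
    (hreflect : ∀ a b, K.Adj (f a) (f b) → H.Adj a b) (η : MultiHom G K)
    (hη : ∀ v, η.1 v ⊆ range f) : ∃ θ : MultiHom G H, map f hf θ = η := by
  refine ⟨⟨fun v => f ⁻¹' η.1 v, fun v => ?_, fun x y hxy a ha b hb =>
    hreflect a b (η.2.2 x y hxy _ ha _ hb)⟩,
    Subtype.ext <| funext fun v => image_preimage_eq_of_subset (hη v)⟩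
  obtain ⟨_, hx⟩ := η.2.1 v
  obtain ⟨a, rfl⟩ := hη v hx
  exact ⟨a, hx⟩

lemma not_map_le_map [Nonempty V] {f : W → X} {g : Y → X}
    (hf : H.IsHom K f) (hg : L.IsHom K g) (hfg : ∀ a b, f a ≠ g b)
    (η : MultiHom G H) (θ : MultiHom G L) : ¬ map f hf η ≤ map g hg θ := by
  intro hle
  obtain ⟨v⟩ := ‹Nonempty V›
  obtain ⟨a, ha⟩ := η.2.1 v
  obtain ⟨b, -, hb⟩ := hle v (mem_image_of_mem f ha)
  exact hfg a b hb.symm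

lemma isLeft_eq (hconn : ∀ u v : V, Relation.ReflTransGen G.Adj u v)
    (hadj : ∀ u, ∃ w, G.Adj u w) (η : MultiHom G (H.coprod L)) {u v : V}
    {x y : W ⊕ Y} (hx : x ∈ η.1 u) (hy : y ∈ η.1 v) : x.isLeft = y.isLeft := by
  let SameSide : V → V → Prop := fun u v => ∀ x ∈ η.1 u, ∀ y ∈ η.1 v, x.isLeft = y.isLeft
  have of_adj {u v} (h : G.Adj u v) : SameSide u v := fun x hx y hy =>
    LGraph.isLeft_eq_of_coprod_adj (η.2.2 u v h x hx y hy)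
  have trans {u v w} (huv : SameSide u v) (hvw : SameSide v w) : SameSide u w := by
    intro x hx z hz
    obtain ⟨y, hy⟩ := η.2.1 v
    exact (huv x hx y hy).trans (hvw y hy z hz)
  have refl (u) : SameSide u u := by
    obtain ⟨w, huw⟩ := hadj u
    exact trans (of_adj huw) (of_adj (G.symm _ _ huw))
  have reach (w) : SameSide u w := by
    induction hconn u w with
    | refl => exact refl u
    | tail _ hvw ih => exact trans ih (of_adj hvw)
  exact reach v x hx y hy

lemma subset_range_inl_or_inr [Nonempty V] (hconn : ∀ u v : V, Relation.ReflTransGen G.Adj u v)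
    (hadj : ∀ u, ∃ w, G.Adj u w) (η : MultiHom G (H.coprod L)) :
    (∀ v, η.1 v ⊆ range Sum.inl) ∨ (∀ v, η.1 v ⊆ range Sum.inr) := by
  obtain ⟨u⟩ := ‹Nonempty V›
  obtain ⟨x, hx⟩ := η.2.1 u
  have side {v y} (hy : y ∈ η.1 v) := isLeft_eq hconn hadj η hx hy
  cases x with
  | inl => exact .inl fun v y hy => by cases y <;> simp_all
  | inr => exact .inr fun v y hy => by cases y <;> simp_all

end MultiHom

open MultiHom

/-- for connected `A` with more than one vertex,
`Hom(A, B ⨿ C) ≅ Hom(A,B) ⨿ Hom(A,C)` as posets. -/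
theorem stmt_3 {VA VB VC : Type} (A : LGraph VA) (B : LGraph VB) (C : LGraph VC)
    [Nontrivial VA] (hconn : ∀ u v : VA, Relation.ReflTransGen A.Adj u v) :
    Nonempty (MultiHom A (B.coprod C) ≃o (MultiHom A B) ⊕ (MultiHom A C)) := by
  have hinl := B.coprod_isHom_inl C
  have hinr := B.coprod_isHom_inr C
  let e : MultiHom A B ⊕ MultiHom A C ↪o MultiHom A (B.coprod C) :=
    (mapOrderEmbedding _ hinl Sum.inl_injective).sumElim
      (mapOrderEmbedding _ hinr Sum.inr_injective)
      (not_map_le_map hinl hinr fun _ _ => Sum.inl_ne_inr)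
      (fun θ η => not_map_le_map hinr hinl (fun _ _ => Sum.inr_ne_inl) η θ)
  have he : Surjective e := by
    intro η
    rcases subset_range_inl_or_inr hconn (A.exists_adj_of_connected hconn) η with hB | hC
    · obtain ⟨θ, rfl⟩ := exists_map_eq _ hinl (fun _ _ => Sum.liftRel_inl_inl.1) η hB
      exact ⟨.inl θ, rfl⟩
    · obtain ⟨θ, rfl⟩ := exists_map_eq _ hinr (fun _ _ => Sum.liftRel_inr_inr.1) η hC
      exact ⟨.inr θ, rfl⟩
  exact ⟨(OrderIso.ofSurjective e he).symm⟩
end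

section
/- If G is a stiff graph, then the identity homomorphism id_G is an isolated point of the poset Hom(G,G): the only element α ∈ Hom(G,G) comparable with id_G is id_G itself. Equivalently, any α ∈ Hom(G,G) with x ∈ α(x) for all x must satisfy α(x) = {x} for all x. -/
/-!
If `x ∈ α(x)` for every `x`, then for `y ∈ α(x)` and any neighbour `w` of `x`, the edge `x ~ w`
forces `α(x) × α(w) ⊆ E`, and in particular `y ~ w` because `w ∈ α(w)`. So `N(x) ⊆ N(y)`, and
stiffness gives `y = x`. Being comparable with the identity already implies `x ∈ α(x)`: from
above trivially, and from below because `α(x)` is a nonempty subset of `{x}`.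
-/

def LGraph.IsStiff {V : Type} (G : LGraph V) : Prop :=
  ∀ u v : V, u ≠ v → ¬ (∀ w, G.Adj v w → G.Adj u w)

namespace LGraph.IsMultiHom

variable {V : Type} {G : LGraph V} {η : V → Set V}

theorem adj_of_mem (hη : G.IsMultiHom G η) (hrefl : ∀ x, x ∈ η x) {x y : V} (hy : y ∈ η x)
    {w : V} (hw : G.Adj x w) : G.Adj y w :=
  hη.2 x w hw y hy w (hrefl w)

theorem eq_singleton_of_isStiff (hG : G.IsStiff) (hη : G.IsMultiHom G η)
    (hrefl : ∀ x, x ∈ η x) (x : V) : η x = {x} := by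
  refine Set.eq_singleton_iff_unique_mem.mpr ⟨hrefl x, fun y hy => ?_⟩
  by_contra hne
  exact hG y x hne fun w hw => hη.adj_of_mem hrefl hy hw

end LGraph.IsMultiHom

theorem MultiHom.mem_self_of_le_id {V : Type} {G : LGraph V} {α : MultiHom G G}
    (h : α ≤ singletonMH id (fun _ _ h => h)) (x : V) : x ∈ α.1 x := by
  obtain ⟨y, hy⟩ := α.2.1 x
  have hyx : y = x := h x hy
  exact hyx ▸ hy

theorem MultiHom.mem_self_of_id_le {V : Type} {G : LGraph V} {α : MultiHom G G}
    (h : singletonMH id (fun _ _ h => h) ≤ α) (x : V) : x ∈ α.1 x :=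
  h x rfl

/-- if `G` is stiff, the identity is isolated in `Hom(G,G)`. -/
theorem stmt_14 {V : Type} (G : LGraph V)
    (hstiff : ∀ u v : V, u ≠ v → ¬ (∀ w, G.Adj v w → G.Adj u w)) :
    (∀ α : MultiHom G G,
      (α ≤ singletonMH id (fun _ _ h => h) ∨ singletonMH id (fun _ _ h => h) ≤ α) →
      α = singletonMH id (fun _ _ h => h)) ∧
    (∀ α : MultiHom G G, (∀ x, x ∈ α.1 x) → ∀ x, α.1 x = {x}) := by
  have hsingleton : ∀ α : MultiHom G G, (∀ x, x ∈ α.1 x) → ∀ x, α.1 x = {x} :=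
    fun α hrefl => α.2.eq_singleton_of_isStiff hstiff hrefl
  refine ⟨fun α hcomp => ?_, hsingleton⟩
  have hrefl : ∀ x, x ∈ α.1 x :=
    hcomp.elim MultiHom.mem_self_of_le_id MultiHom.mem_self_of_id_le
  exact Subtype.ext (funext (hsingleton α hrefl))
end
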